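/- Let S be a mixed metric generator of the hypercube Q_d. Then for every index i ∈ {1, …, d}, S contains a vertex whose i-th coordinate is 0 and a vertex whose i-th coordinate is 1; equivalently, no coordinate is constant over all vertices of S. -/

import Mathlib

/-! In `Q_d` the graph distance is the Hamming distance. A vertex `s` can tell the vertex `x`
from the edge `xy` only if `s` is strictly closer to `y` than to `x`. If every vertex of `S` had
`i`-th coordinate `!c`, take `x` with `x i = !c` and let `y` be `x` with coordinate `i` flipped:
each `s ∈ S` agrees with `x` at `i`, so it is farther from `y` than from `x`, and no vertex of
`S` separates `x` from `xy`. -/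

/-- Distance from a vertex `s` to an edge `e` (as an element of `Sym2 V`):
the minimum of the distances from `s` to the two endpoints of `e`. -/
noncomputable def edgeDist {V : Type*} (G : SimpleGraph V) (e : Sym2 V) (s : V) : ℕ :=
  Sym2.lift ⟨fun x y => min (G.dist x s) (G.dist y s), fun _ _ => min_comm _ _⟩ e

/-- `S` is a metric generator for `G`: every pair of distinct vertices is
distinguished by some element of `S`. -/
def IsMetricGen {V : Type*} (G : SimpleGraph V) (S : Set V) : Prop :=
  ∀ u v : V, u ≠ v → ∃ s ∈ S, G.dist s u ≠ G.dist s v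

/-- `S` is an edge metric generator for `G`: every pair of distinct edges is
distinguished by some element of `S`. -/
def IsEdgeMetricGen {V : Type*} (G : SimpleGraph V) (S : Set V) : Prop :=
  ∀ e₁ ∈ G.edgeSet, ∀ e₂ ∈ G.edgeSet, e₁ ≠ e₂ → ∃ s ∈ S, edgeDist G e₁ s ≠ edgeDist G e₂ s

/-- Distance from a vertex `s` to a mixed element (a vertex or an edge). -/
noncomputable def mixedDist {V : Type*} (G : SimpleGraph V) (a : V ⊕ Sym2 V) (s : V) : ℕ :=
  Sum.elim (fun w => G.dist s w) (fun e => edgeDist G e s) a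

/-- A mixed element is valid if it is a vertex, or an actual edge of `G`. -/
def IsMixedElem {V : Type*} (G : SimpleGraph V) (a : V ⊕ Sym2 V) : Prop :=
  Sum.elim (fun _ => True) (fun e => e ∈ G.edgeSet) a

/-- `S` is a mixed metric generator for `G`: every pair of distinct elements of
`V(G) ∪ E(G)` is distinguished by some element of `S`. -/
def IsMixedMetricGen {V : Type*} (G : SimpleGraph V) (S : Set V) : Prop :=
  ∀ a b : V ⊕ Sym2 V, IsMixedElem G a → IsMixedElem G b → a ≠ b →
    ∃ s ∈ S, mixedDist G a s ≠ mixedDist G b s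

/-- The metric dimension: minimum cardinality of a metric generator. -/
noncomputable def metricDim {V : Type*} [Fintype V] (G : SimpleGraph V) : ℕ :=
  sInf {n | ∃ S : Finset V, S.card = n ∧ IsMetricGen G ↑S}

/-- The edge metric dimension: minimum cardinality of an edge metric generator. -/
noncomputable def edgeMetricDim {V : Type*} [Fintype V] (G : SimpleGraph V) : ℕ :=
  sInf {n | ∃ S : Finset V, S.card = n ∧ IsEdgeMetricGen G ↑S}

/-- The mixed metric dimension: minimum cardinality of a mixed metric generator. -/
noncomputable def mixedMetricDim {V : Type*} [Fintype V] (G : SimpleGraph V) : ℕ :=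
  sInf {n | ∃ S : Finset V, S.card = n ∧ IsMixedMetricGen G ↑S}

/-- The hypercube `Q_d`: vertices are binary vectors of length `d`, with two
vertices adjacent iff they differ in exactly one coordinate. -/
def cube (d : ℕ) : SimpleGraph (Fin d → Bool) where
  Adj u v := hammingDist u v = 1
  symm := ⟨fun u v h => by simp only [hammingDist_comm] at h ⊢; exact h⟩
  loopless := ⟨fun u h => by simp only [hammingDist_self] at h; exact one_ne_zero h.symm⟩

section Hamming

variable {ι : Type*} [Fintype ι] [DecidableEq ι] {β : ι → Type*} [∀ i, DecidableEq (β i)]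

theorem hammingDist_eq_hammingDist_update_add (x y : ∀ i, β i) (i : ι) :
    hammingDist x y = hammingDist (Function.update x i (y i)) y + if x i = y i then 0 else 1 := by
  by_cases hi : x i = y i
  · rw [← hi, Function.update_eq_self, if_pos rfl, add_zero]
  · simp only [hi, if_false, hammingDist]
    have hfilter : Finset.univ.filter (fun j => x j ≠ y j) =
        insert i (Finset.univ.filter fun j => Function.update x i (y i) j ≠ y j) := by
      ext j
      by_cases hj : j = i
      · subst hj; simp [hi]
      · simp [hj]
    rw [hfilter, Finset.card_insert_of_notMem (by simp)]

theorem hammingDist_update_self_left {x : ∀ i, β i} {i : ι} {b : β i} (hb : b ≠ x i) :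
    hammingDist (Function.update x i b) x = 1 := by
  rw [hammingDist_eq_hammingDist_update_add _ x i]
  simp [hb]

theorem hammingDist_update_of_apply_eq {x y : ∀ i, β i} {i : ι} (hi : x i = y i) {b : β i}
    (hb : b ≠ x i) : hammingDist (Function.update x i b) y = hammingDist x y + 1 := by
  rw [hammingDist_eq_hammingDist_update_add _ y i]
  simp [← hi, hb]

end Hamming

theorem edgeDist_mk_of_dist_le {V : Type*} (G : SimpleGraph V) {x y s : V}
    (h : G.dist x s ≤ G.dist y s) : edgeDist G s(x, y) s = G.dist x s :=
  min_eq_left h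

theorem IsMixedMetricGen.exists_dist_lt_of_adj {V : Type*} {G : SimpleGraph V} {S : Set V}
    (hS : IsMixedMetricGen G S) {x y : V} (hxy : G.Adj x y) :
    ∃ s ∈ S, G.dist s y < G.dist s x := by
  by_contra! h
  obtain ⟨s, hs, hne⟩ := hS (.inl x) (.inr s(x, y)) trivial hxy (by simp)
  apply hne
  simp only [mixedDist, Sum.elim_inl, Sum.elim_inr, SimpleGraph.dist_comm (u := s)]
  rw [edgeDist_mk_of_dist_le G (by simpa only [SimpleGraph.dist_comm] using h s hs)]

namespace cube

variable {d : ℕ}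

theorem adj_update {x : Fin d → Bool} {i : Fin d} {b : Bool} (hb : b ≠ x i) :
    (cube d).Adj x (Function.update x i b) := by
  change hammingDist _ _ = 1
  rw [hammingDist_comm, hammingDist_update_self_left hb]

theorem hammingDist_le_length {u v : Fin d → Bool} (p : (cube d).Walk u v) :
    hammingDist u v ≤ p.length := by
  induction p with
  | nil => simp
  | @cons a b c hab p ih =>
    have hab' : hammingDist a b = 1 := hab
    calc hammingDist a c ≤ hammingDist a b + hammingDist b c := hammingDist_triangle _ _ _
      _ ≤ (SimpleGraph.Walk.cons hab p).length := by
        simp only [SimpleGraph.Walk.length_cons]; omega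

theorem exists_walk_length_eq_hammingDist (u v : Fin d → Bool) :
    ∃ p : (cube d).Walk u v, p.length = hammingDist u v := by
  induction h : hammingDist u v generalizing u with
  | zero => obtain rfl := hammingDist_eq_zero.mp h; exact ⟨.nil, rfl⟩
  | succ n ih =>
    obtain ⟨i, hi⟩ := Function.ne_iff.mp (hammingDist_ne_zero.mp (by omega) : u ≠ v)
    have hstep := hammingDist_eq_hammingDist_update_add u v i
    rw [if_neg hi, h] at hstep
    obtain ⟨p, hp⟩ := ih (Function.update u i (v i)) (by omega)
    exact ⟨.cons (adj_update (Ne.symm hi)) p, by simp [hp]⟩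

theorem dist_eq_hammingDist (u v : Fin d → Bool) : (cube d).dist u v = hammingDist u v := by
  obtain ⟨p, hp⟩ := exists_walk_length_eq_hammingDist u v
  obtain ⟨q, hq⟩ := (SimpleGraph.Walk.reachable p).exists_walk_length_eq_dist
  exact le_antisymm (hp ▸ SimpleGraph.dist_le p) (hq ▸ hammingDist_le_length q)

end cube

theorem IsMixedMetricGen.cube_exists_mem_apply_eq {d : ℕ} {S : Set (Fin d → Bool)}
    (hS : IsMixedMetricGen (cube d) S) (i : Fin d) (c : Bool) : ∃ s ∈ S, s i = c := by
  let x : Fin d → Bool := fun _ => !c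
  obtain ⟨s, hs, hlt⟩ :=
    hS.exists_dist_lt_of_adj (cube.adj_update (x := x) (i := i) (b := c) (by simp [x]))
  refine ⟨s, hs, ?_⟩
  by_contra hsi
  have hxs : x i = s i := by cases c <;> simp_all [x]
  rw [cube.dist_eq_hammingDist, cube.dist_eq_hammingDist, hammingDist_comm s, hammingDist_comm s,
    hammingDist_update_of_apply_eq hxs (by simp [x])] at hlt
  omega

/-- If `S` is a mixed metric generator of `Q_d` then no
coordinate is constant over `S`: for every index `i`, `S` contains a vertex
whose `i`-th coordinate is `0` and a vertex whose `i`-th coordinate is `1`. -/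
theorem stmt16 (d : ℕ) (S : Set (Fin d → Bool))
    (hS : IsMixedMetricGen (cube d) S) (i : Fin d) :
    (∃ a ∈ S, a i = false) ∧ (∃ b ∈ S, b i = true) :=
  ⟨hS.cube_exists_mem_apply_eq i false, hS.cube_exists_mem_apply_eq i true⟩
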